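/- arXiv:2304.11641 — 9 statements merged into one kernel-verified Lean document; each statement's English description precedes it below -/
import Mathlib

section
/- For every PQCL formula φ over an alphabet Σ and every finite word w : List Σ, if deg φ w = some k then 1 ≤ k and k ≤ opt φ; that is, the satisfaction degree of any satisfying word is a positive integer bounded above by the optionality of the formula. -/
inductive PQCL (A : Type*) where
  | atom : Set (List A) → PQCL A
  | odis : PQCL A → PQCL A → PQCL A
  | pconj : PQCL A → PQCL A → PQCL A

namespace PQCL

variable {A : Type*}

/-- Optionality of a PQCL formula. -/
def opt : PQCL A → ℕ
  | atom _ => 1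
  | odis φ₁ φ₂ => opt φ₁ + opt φ₂
  | pconj φ₁ φ₂ => opt φ₁ * opt φ₂

open Classical in
/-- Satisfaction degree of a word w.r.t. a PQCL formula (`none` = does not satisfy). -/
noncomputable def deg : PQCL A → List A → Option ℕ
  | atom L, w => if w ∈ L then some 1 else none
  | odis φ₁ φ₂, w =>
    match deg φ₁ w with
    | some k => some k
    | none =>
      match deg φ₂ w with
      | some n => some (n + opt φ₁)
      | none => none
  | pconj φ₁ φ₂, w =>
    match deg φ₁ w, deg φ₂ w with
    | some i, some j => some (opt φ₂ * (i - 1) + j)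
    | _, _ => none

/-- Dissatisfaction score of a word w.r.t. a PQCL formula. -/
noncomputable def dscore (w : List A) (φ : PQCL A) : ℚ :=
  match deg φ w with
  | some k => (k : ℚ) / (opt φ + 1)
  | none => 1

/-- Reward associated with a word w.r.t. a PQCL formula. -/
noncomputable def reward (w : List A) (φ : PQCL A) : ℕ :=
  match deg φ w with
  | some k => opt φ - k + 1
  | none => 0

end PQCL

theorem deg_pos_and_le_opt {A : Type*} (φ : PQCL A) (w : List A) (k : ℕ)
    (h : PQCL.deg φ w = some k) : 1 ≤ k ∧ k ≤ PQCL.opt φ := by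
  induction φ generalizing k with
  | atom L =>
    simp only [PQCL.deg] at h
    split at h
    · simp_all [PQCL.opt]
    · simp at h
  | odis φ₁ φ₂ ih₁ ih₂ =>
    simp only [PQCL.deg] at h
    rcases h1 : PQCL.deg φ₁ w with _ | k₁ <;> rw [h1] at h
    · rcases h2 : PQCL.deg φ₂ w with _ | k₂ <;> rw [h2] at h
      · simp at h
      · simp only [Option.some.injEq] at h
        obtain ⟨a, b⟩ := ih₂ k₂ h2
        subst h
        simp only [PQCL.opt]
        omega
    · simp only [Option.some.injEq] at h
      obtain ⟨a, b⟩ := ih₁ k₁ h1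
      subst h
      simp only [PQCL.opt]
      omega
  | pconj φ₁ φ₂ ih₁ ih₂ =>
    simp only [PQCL.deg] at h
    rcases h1 : PQCL.deg φ₁ w with _ | i <;> rw [h1] at h <;>
      rcases h2 : PQCL.deg φ₂ w with _ | j <;> try rw [h2] at h
    all_goals simp only [Option.some.injEq] at h <;> try exact absurd h (by simp)
    obtain ⟨a1, b1⟩ := ih₁ i h1
    obtain ⟨a2, b2⟩ := ih₂ j h2
    subst h
    simp only [PQCL.opt]
    obtain ⟨i', rfl⟩ : ∃ i', i = i' + 1 := ⟨i - 1, by omega⟩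
    refine ⟨by omega, ?_⟩
    calc PQCL.opt φ₂ * (i' + 1 - 1) + j = PQCL.opt φ₂ * i' + j := by simp
      _ ≤ PQCL.opt φ₂ * i' + PQCL.opt φ₂ := by omega
      _ = PQCL.opt φ₂ * (i' + 1) := by ring
      _ ≤ PQCL.opt φ₂ * PQCL.opt φ₁ := Nat.mul_le_mul_left _ b1
      _ = PQCL.opt φ₁ * PQCL.opt φ₂ := Nat.mul_comm _ _
end

section
/- (Lemma 1) Let φ be a PQCL formula over Σ and let w, w' : List Σ be words such that w satisfies φ to some degree (deg φ w = some n for some n). If d(w, φ) ≤ d(w', φ), then either (deg φ w = some k for some k and deg φ w' = none) or (there exist n, m with deg φ w = some n, deg φ w' = some m, and n ≤ m). -/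
theorem lemma1_preference {A : Type*} (φ : PQCL A) (w w' : List A)
    (hw : ∃ n, PQCL.deg φ w = some n)
    (hle : PQCL.dscore w φ ≤ PQCL.dscore w' φ) :
    (∃ k, PQCL.deg φ w = some k ∧ PQCL.deg φ w' = none) ∨
    (∃ n m, PQCL.deg φ w = some n ∧ PQCL.deg φ w' = some m ∧ n ≤ m) := by
  obtain ⟨n, hn⟩ := hw
  cases h' : PQCL.deg φ w' with
  | none => exact Or.inl ⟨n, hn, rfl⟩
  | some m =>
    refine Or.inr ⟨n, m, hn, rfl, ?_⟩
    unfold PQCL.dscore at hle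
    rw [hn, h'] at hle
    simp only at hle
    have hpos : (0 : ℚ) < (PQCL.opt φ : ℚ) + 1 := by positivity
    rw [div_le_div_iff_of_pos_right hpos] at hle
    exact_mod_cast hle
end

section
/- For every PQCL formula φ over Σ and every word w : List Σ, the dissatisfaction score satisfies 0 < d(w, φ) ≤ 1; moreover d(w, φ) < 1 if and only if deg φ w ≠ none (i.e., w satisfies φ to some degree). -/
namespace PQCL

theorem opt_pos {A : Type*} (φ : PQCL A) : 1 ≤ opt φ := by
  induction φ with
  | atom L => simp [opt]
  | odis φ₁ φ₂ h1 h2 => simp [opt]; omega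
  | pconj φ₁ φ₂ h1 h2 => simpa [opt] using Nat.one_le_iff_ne_zero.2 (Nat.mul_ne_zero (by omega) (by omega))

theorem deg_bounds {A : Type*} (φ : PQCL A) (w : List A) :
    ∀ k, deg φ w = some k → 1 ≤ k ∧ k ≤ opt φ := by
  induction φ with
  | atom L =>
    intro k h
    simp [deg] at h
    by_cases hw : w ∈ L <;> simp [hw] at h
    simp [opt]; omega
  | odis φ₁ φ₂ h1 h2 =>
    intro k h
    simp only [deg] at h
    cases e1 : deg φ₁ w with
    | some i => rw [e1] at h; simp at h; have := h1 i e1; simp [opt]; omega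
    | none =>
      rw [e1] at h
      cases e2 : deg φ₂ w with
      | some j => rw [e2] at h; simp at h; have := h2 j e2; have := opt_pos φ₁; simp [opt]; omega
      | none => rw [e2] at h; simp at h
  | pconj φ₁ φ₂ h1 h2 =>
    intro k h
    simp only [deg] at h
    cases e1 : deg φ₁ w with
    | none => rw [e1] at h; simp at h
    | some i =>
      rw [e1] at h
      cases e2 : deg φ₂ w with
      | none => rw [e2] at h; simp at h
      | some j =>
        rw [e2] at h; simp at h
        have hi := h1 i e1
        have hj := h2 j e2
        subst h
        constructor
        · omega
        · simp only [opt]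
          have : opt φ₂ * (i - 1) + j ≤ opt φ₂ * (i - 1) + opt φ₂ := by omega
          calc opt φ₂ * (i - 1) + j ≤ opt φ₂ * (i - 1) + opt φ₂ := this
            _ = opt φ₂ * i := by
                have : i - 1 + 1 = i := by omega
                rw [← Nat.mul_succ, Nat.succ_eq_add_one, this]
            _ ≤ opt φ₂ * opt φ₁ := Nat.mul_le_mul_left _ hi.2
            _ = opt φ₁ * opt φ₂ := Nat.mul_comm _ _

end PQCL

theorem dscore_pos_le_one {A : Type*} (φ : PQCL A) (w : List A) :
    (0 < PQCL.dscore w φ ∧ PQCL.dscore w φ ≤ 1) ∧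
    (PQCL.dscore w φ < 1 ↔ PQCL.deg φ w ≠ none) := by
  have hopt : (1 : ℚ) ≤ (PQCL.opt φ : ℚ) := by exact_mod_cast PQCL.opt_pos φ
  have hden : (0 : ℚ) < (PQCL.opt φ : ℚ) + 1 := by linarith
  cases e : PQCL.deg φ w with
  | none =>
    simp only [PQCL.dscore, e]
    norm_num
  | some k =>
    have ⟨hk1, hk2⟩ := PQCL.deg_bounds φ w k e
    have hk1' : (1 : ℚ) ≤ (k : ℚ) := by exact_mod_cast hk1
    have hk2' : (k : ℚ) ≤ (PQCL.opt φ : ℚ) := by exact_mod_cast hk2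
    simp only [PQCL.dscore, e]
    refine ⟨⟨by positivity, ?_⟩, ?_⟩
    · rw [div_le_one hden]; linarith
    · simp only [ne_eq, reduceCtorEq, not_false_iff, iff_true]
      rw [div_lt_one hden]; linarith
end

section
/- (Priority semantics of ordered disjunction) Let φ₁, φ₂ be PQCL formulas over Σ. If deg φ₁ w = some i for some i, and deg φ₁ w' = none while deg φ₂ w' = some n for some n, then d(w, φ₁ ⊗ φ₂) < d(w', φ₁ ⊗ φ₂): any word satisfying φ₁ is strictly preferred to any word satisfying only φ₂. -/
theorem PQCL.deg_bounds_s9 {A : Type*} : ∀ (φ : PQCL A) (w : List A) (k : ℕ),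
    PQCL.deg φ w = some k → 1 ≤ k ∧ k ≤ PQCL.opt φ
  | PQCL.atom L, w, k => by
      simp only [PQCL.deg, PQCL.opt]
      split <;> simp_all
  | PQCL.odis φ₁ φ₂, w, k => by
      simp only [PQCL.deg, PQCL.opt]
      cases h1 : PQCL.deg φ₁ w with
      | some m =>
        have := PQCL.deg_bounds_s9 φ₁ w m h1
        intro h; simp at h; omega
      | none =>
        cases h2 : PQCL.deg φ₂ w with
        | some n =>
          have := PQCL.deg_bounds_s9 φ₂ w n h2
          intro h; simp at h; omega
        | none => intro h; simp at h
  | PQCL.pconj φ₁ φ₂, w, k => by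
      simp only [PQCL.deg, PQCL.opt]
      cases h1 : PQCL.deg φ₁ w with
      | some i =>
        cases h2 : PQCL.deg φ₂ w with
        | some j =>
          have b1 := PQCL.deg_bounds_s9 φ₁ w i h1
          have b2 := PQCL.deg_bounds_s9 φ₂ w j h2
          intro h; simp at h
          constructor
          · omega
          · subst h
            have : PQCL.opt φ₂ * (i - 1) + j ≤ PQCL.opt φ₂ * (PQCL.opt φ₁ - 1) + PQCL.opt φ₂ := by
              have := Nat.mul_le_mul_left (PQCL.opt φ₂) (Nat.sub_le_sub_right b1.2 1)
              omega
            have h2' : PQCL.opt φ₂ * (PQCL.opt φ₁ - 1) + PQCL.opt φ₂ = PQCL.opt φ₁ * PQCL.opt φ₂ := by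
              obtain ⟨c, hc⟩ : ∃ c, PQCL.opt φ₁ = c + 1 := ⟨PQCL.opt φ₁ - 1, by omega⟩
              rw [hc]; simp [Nat.mul_add, Nat.add_mul]; ring
            omega
        | none => intro h; simp at h
      | none => intro h; simp at h

theorem odis_priority {A : Type*} (φ₁ φ₂ : PQCL A) (w w' : List A)
    (hw : ∃ i, PQCL.deg φ₁ w = some i)
    (hw'₁ : PQCL.deg φ₁ w' = none)
    (hw'₂ : ∃ n, PQCL.deg φ₂ w' = some n) :
    PQCL.dscore w (PQCL.odis φ₁ φ₂) < PQCL.dscore w' (PQCL.odis φ₁ φ₂) := by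
  obtain ⟨i, hi⟩ := hw
  obtain ⟨n, hn⟩ := hw'₂
  have b1 := PQCL.deg_bounds_s9 φ₁ w i hi
  have b2 := PQCL.deg_bounds_s9 φ₂ w' n hn
  have hd : PQCL.deg (PQCL.odis φ₁ φ₂) w = some i := by
    simp [PQCL.deg, hi]
  have hd' : PQCL.deg (PQCL.odis φ₁ φ₂) w' = some (n + PQCL.opt φ₁) := by
    simp [PQCL.deg, hw'₁, hn]
  simp only [PQCL.dscore, hd, hd']
  have hpos : (0 : ℚ) < (PQCL.opt (PQCL.odis φ₁ φ₂) : ℚ) + 1 := by positivity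
  have hlt : (i : ℚ) < ((n + PQCL.opt φ₁ : ℕ) : ℚ) := by
    exact_mod_cast (by omega : i < n + PQCL.opt φ₁)
  push_cast
  gcongr
  exact_mod_cast hlt
end

section
/- (Lemma 3, semantic form) Let φ₁, φ₂ be PQCL formulas over Σ, let M₁ : DFA Σ Q₁ and M₂ : DFA Σ Q₂ be DFAs, and let ω₁ : Q₁ → ℕ and ω₂ : Q₂ → ℕ compute the satisfaction degrees of φ₁ and φ₂ respectively. Define Ω : Q₁ × Q₂ → ℕ by Ω (q₁, q₂) = ω₁ q₁ if ω₁ q₁ > 0; Ω (q₁, q₂) = ω₂ q₂ + opt φ₁ if ω₁ q₁ = 0 and ω₂ q₂ > 0; and Ω (q₁, q₂) = 0 otherwise. Then Ω computes the satisfaction degrees of the ordered disjunction φ₁ ⊗ φ₂: for every word x, if Ω (M₁.eval x, M₂.eval x) = k > 0 then deg (φ₁ ⊗ φ₂) x = some k, and if Ω (M₁.eval x, M₂.eval x) = 0 then deg (φ₁ ⊗ φ₂) x = none. -/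
/-- `ω` computes the satisfaction degrees of `ψ` via the DFA `M`. -/
def Computes {A Q : Type*} (M : DFA A Q) (ω : Q → ℕ) (ψ : PQCL A) : Prop :=
  (∀ (x : List A) (k : ℕ), PQCL.deg ψ x = some k → ω (M.eval x) = k) ∧
  (∀ x : List A, PQCL.deg ψ x = none → ω (M.eval x) = 0)


theorem deg_pos_aux {A : Type*} (φ : PQCL A) (x : List A) (k : ℕ)
    (h : PQCL.deg φ x = some k) : 0 < k := by
  induction φ generalizing k with
  | atom L =>
    simp only [PQCL.deg] at h
    split at h <;> simp_all <;> omega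
  | odis φ₁ φ₂ ih₁ ih₂ =>
    simp only [PQCL.deg] at h
    rcases h1 : PQCL.deg φ₁ x with _ | k1 <;> rw [h1] at h
    · rcases h2 : PQCL.deg φ₂ x with _ | k2 <;> rw [h2] at h
      · simp at h
      · simp at h; have := ih₂ k2 h2; omega
    · simp at h; subst h; exact ih₁ k1 h1
  | pconj φ₁ φ₂ ih₁ ih₂ =>
    simp only [PQCL.deg] at h
    rcases h1 : PQCL.deg φ₁ x with _ | k1 <;> rw [h1] at h <;>
      rcases h2 : PQCL.deg φ₂ x with _ | k2 <;> (try rw [h2] at h) <;> simp_all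
    omega

theorem wdfa_odis {A Q₁ Q₂ : Type*} (φ₁ φ₂ : PQCL A)
    (M₁ : DFA A Q₁) (M₂ : DFA A Q₂) (ω₁ : Q₁ → ℕ) (ω₂ : Q₂ → ℕ)
    (h₁ : Computes M₁ ω₁ φ₁) (h₂ : Computes M₂ ω₂ φ₂)
    (Ω : Q₁ × Q₂ → ℕ)
    (hΩ : ∀ q₁ q₂, Ω (q₁, q₂) =
      if 0 < ω₁ q₁ then ω₁ q₁
      else if 0 < ω₂ q₂ then ω₂ q₂ + PQCL.opt φ₁
      else 0) :
    ∀ x : List A,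
      (∀ k : ℕ, Ω (M₁.eval x, M₂.eval x) = k → 0 < k →
        PQCL.deg (PQCL.odis φ₁ φ₂) x = some k) ∧
      (Ω (M₁.eval x, M₂.eval x) = 0 → PQCL.deg (PQCL.odis φ₁ φ₂) x = none) := by
  intro x
  rw [hΩ]
  rcases h1 : PQCL.deg φ₁ x with _ | k1
  · have e1 : ω₁ (M₁.eval x) = 0 := h₁.2 x h1
    rcases h2 : PQCL.deg φ₂ x with _ | k2
    · have e2 : ω₂ (M₂.eval x) = 0 := h₂.2 x h2
      simp [e1, e2, PQCL.deg, h1, h2]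
    · have e2 : ω₂ (M₂.eval x) = k2 := h₂.1 x k2 h2
      have hp2 := deg_pos_aux φ₂ x k2 h2
      simp only [e1, e2, PQCL.deg, h1, h2]
      constructor
      · intro k hk _
        simp only [if_neg (by omega : ¬ 0 < 0), if_pos hp2] at hk
        exact congrArg some hk
      · intro hk
        simp only [if_neg (by omega : ¬ 0 < 0), if_pos hp2] at hk
        exact absurd hk (by omega)
  · have e1 : ω₁ (M₁.eval x) = k1 := h₁.1 x k1 h1
    have hp1 := deg_pos_aux φ₁ x k1 h1
    simp only [e1, if_pos hp1, PQCL.deg, h1]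
    constructor
    · intro k hk _; exact congrArg some hk
    · intro hk; exact absurd hk (by omega)
end

section
/- (Lemma 4, semantic form) Let φ₁, φ₂ be PQCL formulas over Σ, let M₁ : DFA Σ Q₁ and M₂ : DFA Σ Q₂ be DFAs, and let ω₁ : Q₁ → ℕ and ω₂ : Q₂ → ℕ compute the satisfaction degrees of φ₁ and φ₂ respectively. Define Ω : Q₁ × Q₂ → ℕ by Ω (q₁, q₂) = ω₂ q₂ + opt φ₂ * (ω₁ q₁ - 1) if ω₁ q₁ > 0 and ω₂ q₂ > 0, and Ω (q₁, q₂) = 0 otherwise. Then Ω computes the satisfaction degrees of the prioritized conjunction φ₁ & φ₂: for every word x, if Ω (M₁.eval x, M₂.eval x) = k > 0 then deg (φ₁ & φ₂) x = some k, and if Ω (M₁.eval x, M₂.eval x) = 0 then deg (φ₁ & φ₂) x = none. -/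
theorem PQCL.deg_pos {A : Type*} (φ : PQCL A) (w : List A) :
    ∀ k, PQCL.deg φ w = some k → 0 < k := by
  induction φ with
  | atom L =>
    intro k hk
    simp only [PQCL.deg] at hk
    split at hk
    · simp at hk; omega
    · simp at hk
  | odis φ₁ φ₂ ih₁ ih₂ =>
    intro k hk
    simp only [PQCL.deg] at hk
    rcases h1 : PQCL.deg φ₁ w with _ | i
    · rw [h1] at hk
      rcases h2 : PQCL.deg φ₂ w with _ | j
      · simp [h2] at hk
      · rw [h2] at hk
        simp at hk
        have := ih₂ j h2
        omega
    · rw [h1] at hk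
      simp at hk
      subst hk
      exact ih₁ i h1
  | pconj φ₁ φ₂ ih₁ ih₂ =>
    intro k hk
    simp only [PQCL.deg] at hk
    rcases h1 : PQCL.deg φ₁ w with _ | i <;> rw [h1] at hk <;>
      rcases h2 : PQCL.deg φ₂ w with _ | j <;> rw [h2] at hk <;> simp at hk
    have := ih₂ j h2
    omega

theorem wdfa_pconj {A Q₁ Q₂ : Type*} (φ₁ φ₂ : PQCL A)
    (M₁ : DFA A Q₁) (M₂ : DFA A Q₂) (ω₁ : Q₁ → ℕ) (ω₂ : Q₂ → ℕ)
    (h₁ : Computes M₁ ω₁ φ₁) (h₂ : Computes M₂ ω₂ φ₂)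
    (Ω : Q₁ × Q₂ → ℕ)
    (hΩ : ∀ q₁ q₂, Ω (q₁, q₂) =
      if 0 < ω₁ q₁ ∧ 0 < ω₂ q₂ then ω₂ q₂ + PQCL.opt φ₂ * (ω₁ q₁ - 1)
      else 0) :
    ∀ x : List A,
      (∀ k : ℕ, Ω (M₁.eval x, M₂.eval x) = k → 0 < k →
        PQCL.deg (PQCL.pconj φ₁ φ₂) x = some k) ∧
      (Ω (M₁.eval x, M₂.eval x) = 0 → PQCL.deg (PQCL.pconj φ₁ φ₂) x = none) := by
  intro x
  have hΩx := hΩ (M₁.eval x) (M₂.eval x)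
  rcases h1 : PQCL.deg φ₁ x with _ | i
  · have hw1 : ω₁ (M₁.eval x) = 0 := h₁.2 x h1
    rw [hw1] at hΩx
    simp at hΩx
    constructor
    · intro k hk hkpos; rw [hΩx] at hk; omega
    · intro _
      simp only [PQCL.deg, h1]
  · have hw1 : ω₁ (M₁.eval x) = i := h₁.1 x i h1
    have hi : 0 < i := PQCL.deg_pos φ₁ x i h1
    rcases h2 : PQCL.deg φ₂ x with _ | j
    · have hw2 : ω₂ (M₂.eval x) = 0 := h₂.2 x h2
      rw [hw2] at hΩx
      simp at hΩx
      constructor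
      · intro k hk hkpos; rw [hΩx] at hk; omega
      · intro _
        simp only [PQCL.deg, h1, h2]
    · have hw2 : ω₂ (M₂.eval x) = j := h₂.1 x j h2
      have hj : 0 < j := PQCL.deg_pos φ₂ x j h2
      rw [hw1, hw2] at hΩx
      rw [if_pos ⟨hi, hj⟩] at hΩx
      constructor
      · intro k hk hkpos
        rw [hΩx] at hk
        simp only [PQCL.deg, h1, h2]
        rw [← hk]
        congr 1
        omega
      · intro hk; rw [hΩx] at hk; omega
end

section
/- (Lemma 5 for ordered disjunction) Let n₁, n₂ be positive naturals (the optionalities of φ₁ and φ₂) and let ω₁ : Q₁ → ℕ, ω₂ : Q₂ → ℕ be weight functions with ω₁ q ≤ n₁ for all q ∈ Q₁ and ω₂ q ≤ n₂ for all q ∈ Q₂. Suppose there exists q₁⁰ ∈ Q₁ with ω₁ q₁⁰ = 0 and there exists q₂* ∈ Q₂ with ω₂ q₂* = n₂. Define Ω (q₁, q₂) = ω₁ q₁ if ω₁ q₁ > 0; Ω (q₁, q₂) = ω₂ q₂ + n₁ if ω₁ q₁ = 0 and ω₂ q₂ > 0; Ω (q₁, q₂) = 0 otherwise. Then the maximal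 value of Ω over Q₁ × Q₂ is n₁ + n₂, the optionality of the ordered disjunction. -/
theorem max_weight_odis {Q₁ Q₂ : Type*} [Nonempty Q₁] [Nonempty Q₂]
    (n₁ n₂ : ℕ) (hn₁ : 1 ≤ n₁) (hn₂ : 1 ≤ n₂)
    (ω₁ : Q₁ → ℕ) (ω₂ : Q₂ → ℕ)
    (hb₁ : ∀ q : Q₁, ω₁ q ≤ n₁) (hb₂ : ∀ q : Q₂, ω₂ q ≤ n₂)
    (hq₁ : ∃ q : Q₁, ω₁ q = 0) (hq₂ : ∃ q : Q₂, ω₂ q = n₂)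
    (Ω : Q₁ × Q₂ → ℕ)
    (hΩ : ∀ q₁ q₂, Ω (q₁, q₂) =
      if 0 < ω₁ q₁ then ω₁ q₁
      else if 0 < ω₂ q₂ then ω₂ q₂ + n₁
      else 0) :
    (∃ p : Q₁ × Q₂, Ω p = n₁ + n₂) ∧ (∀ p : Q₁ × Q₂, Ω p ≤ n₁ + n₂) := by
  obtain ⟨a, ha⟩ := hq₁
  obtain ⟨b, hb⟩ := hq₂
  constructor
  · refine ⟨(a, b), ?_⟩
    rw [hΩ, ha, hb]
    simp only [lt_self_iff_false, if_false]
    rw [if_pos (by omega)]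
    omega
  · rintro ⟨x, y⟩
    rw [hΩ]
    have := hb₁ x; have := hb₂ y
    split_ifs <;> omega
end

section
/- (Lemma 5 for prioritized conjunction) Let n₁, n₂ be positive naturals (the optionalities of φ₁ and φ₂) and let ω₁ : Q₁ → ℕ, ω₂ : Q₂ → ℕ be weight functions with ω₁ q ≤ n₁ for all q ∈ Q₁ and ω₂ q ≤ n₂ for all q ∈ Q₂. Suppose there exist q₁* ∈ Q₁ with ω₁ q₁* = n₁ and q₂* ∈ Q₂ with ω₂ q₂* = n₂. Define Ω (q₁, q₂) = ω₂ q₂ + n₂ * (ω₁ q₁ - 1) if ω₁ q₁ > 0 and ω₂ q₂ > 0, and Ω (q₁, q₂) = 0 otherwise. Then the maximal value of Ω over Q₁ × Q₂ is n₁ * n₂, the optionality of the prioritized conjunction. -/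
theorem max_weight_pconj {Q₁ Q₂ : Type*} [Nonempty Q₁] [Nonempty Q₂]
    (n₁ n₂ : ℕ) (hn₁ : 1 ≤ n₁) (hn₂ : 1 ≤ n₂)
    (ω₁ : Q₁ → ℕ) (ω₂ : Q₂ → ℕ)
    (hb₁ : ∀ q : Q₁, ω₁ q ≤ n₁) (hb₂ : ∀ q : Q₂, ω₂ q ≤ n₂)
    (hq₁ : ∃ q : Q₁, ω₁ q = n₁) (hq₂ : ∃ q : Q₂, ω₂ q = n₂)
    (Ω : Q₁ × Q₂ → ℕ)
    (hΩ : ∀ q₁ q₂, Ω (q₁, q₂) =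
      if 0 < ω₁ q₁ ∧ 0 < ω₂ q₂ then ω₂ q₂ + n₂ * (ω₁ q₁ - 1)
      else 0) :
    (∃ p : Q₁ × Q₂, Ω p = n₁ * n₂) ∧ (∀ p : Q₁ × Q₂, Ω p ≤ n₁ * n₂) := by
  obtain ⟨a, ha⟩ := hq₁
  obtain ⟨b, hb⟩ := hq₂
  have e2 : n₁ * n₂ = n₂ * n₁ := Nat.mul_comm _ _
  have e1 : n₂ * n₁ = n₂ * (n₁ - 1) + n₂ := by
    conv_lhs => rw [← Nat.succ_pred_eq_of_pos hn₁]
    rw [Nat.mul_succ]; rfl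
  constructor
  · refine ⟨(a, b), ?_⟩
    rw [hΩ, if_pos ⟨by omega, by omega⟩, ha, hb]
    omega
  · rintro ⟨p, q⟩
    rw [hΩ]
    split
    · have h1 := hb₁ p
      have h2 := hb₂ q
      have h3 : n₂ * (ω₁ p - 1) ≤ n₂ * (n₁ - 1) :=
        Nat.mul_le_mul_left _ (by omega)
      omega
    · positivity
end

section
/- (Regularity of degree languages) Let φ be a PQCL formula over Σ in which every atomic language L is a regular language (Language.IsRegular in Mathlib, identifying Set (List Σ) with Language Σ). Then for every k : ℕ, the language {w : List Σ | deg φ w = some k} is regular, and the language {w : List Σ | deg φ w = none} is regular. -/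
/-- All atomic languages of a PQCL formula are regular. -/
def AtomsRegular {A : Type*} : PQCL A → Prop
  | PQCL.atom L => Language.IsRegular (L : Language A)
  | PQCL.odis φ₁ φ₂ => AtomsRegular φ₁ ∧ AtomsRegular φ₂
  | PQCL.pconj φ₁ φ₂ => AtomsRegular φ₁ ∧ AtomsRegular φ₂

/-!
The degree of a compound formula is a fixed function of the degrees of its two components, so
`deg φ` is the output of a finite Moore machine: run the automata of all atoms in parallel and read
the degree off the tuple of their final states. Every fibre of such a map is then recognised by the
same automaton with a suitable set of accepting states.
-/

def IsFiniteStateMap {T α : Type*} (f : List T → α) : Prop :=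
  ∃ σ : Type, ∃ _ : Fintype σ, ∃ (step : σ → T → σ) (start : σ) (out : σ → α),
    ∀ w, f w = out (w.foldl step start)

theorem List.foldl_pair {T σ₁ σ₂ : Type*} (step₁ : σ₁ → T → σ₁) (step₂ : σ₂ → T → σ₂)
    (s : σ₁ × σ₂) (w : List T) :
    w.foldl (fun s a => (step₁ s.1 a, step₂ s.2 a)) s = (w.foldl step₁ s.1, w.foldl step₂ s.2) := by
  induction w generalizing s with
  | nil => rfl
  | cons a w ih => exact ih _

namespace IsFiniteStateMap

variable {T α β γ : Type*} {f : List T → α} {g : List T → β}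

theorem comp (hf : IsFiniteStateMap f) (h : α → β) : IsFiniteStateMap (h ∘ f) := by
  obtain ⟨σ, _, step, start, out, hout⟩ := hf
  exact ⟨σ, inferInstance, step, start, h ∘ out, fun w => congrArg h (hout w)⟩

theorem map₂ (hf : IsFiniteStateMap f) (hg : IsFiniteStateMap g) (op : α → β → γ) :
    IsFiniteStateMap fun w => op (f w) (g w) := by
  obtain ⟨σ₁, _, step₁, start₁, out₁, hout₁⟩ := hf
  obtain ⟨σ₂, _, step₂, start₂, out₂, hout₂⟩ := hg
  refine ⟨σ₁ × σ₂, inferInstance, fun s a => (step₁ s.1 a, step₂ s.2 a), (start₁, start₂),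
    fun s => op (out₁ s.1) (out₂ s.2), fun w => ?_⟩
  rw [List.foldl_pair]
  exact congrArg₂ op (hout₁ w) (hout₂ w)

theorem isRegular_preimage (hf : IsFiniteStateMap f) (S : Set α) :
    Language.IsRegular (f ⁻¹' S : Language T) := by
  obtain ⟨σ, _, step, start, out, hout⟩ := hf
  refine ⟨σ, inferInstance, ⟨step, start, out ⁻¹' S⟩, ?_⟩
  ext w
  change w.foldl step start ∈ out ⁻¹' S ↔ f w ∈ S
  rw [hout]
  rfl

end IsFiniteStateMap

theorem Language.IsRegular.isFiniteStateMap_mem {T : Type*} {L : Language T} (hL : L.IsRegular) :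
    IsFiniteStateMap (· ∈ L) := by
  obtain ⟨σ, _, M, rfl⟩ := hL
  exact ⟨σ, inferInstance, M.step, M.start, (· ∈ M.accept), fun _ => rfl⟩

namespace PQCL

variable {A : Type*}

open Classical in
theorem deg_atom (L : Set (List A)) :
    deg (atom L) = fun w => if w ∈ L then some 1 else none :=
  rfl

theorem deg_odis (φ₁ φ₂ : PQCL A) :
    deg (odis φ₁ φ₂) = fun w => (deg φ₁ w).or ((deg φ₂ w).map (· + opt φ₁)) := by
  funext w
  simp only [deg]
  cases deg φ₁ w <;> cases deg φ₂ w <;> rfl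

theorem deg_pconj (φ₁ φ₂ : PQCL A) :
    deg (pconj φ₁ φ₂) = fun w =>
      Option.map₂ (fun i j => opt φ₂ * (i - 1) + j) (deg φ₁ w) (deg φ₂ w) := by
  funext w
  simp only [deg]
  cases deg φ₁ w <;> cases deg φ₂ w <;> rfl

theorem isFiniteStateMap_deg : ∀ φ : PQCL A, AtomsRegular φ → IsFiniteStateMap (deg φ)
  | atom L, hL => by
    classical
    rw [deg_atom]
    exact (Language.IsRegular.isFiniteStateMap_mem hL).comp fun p => if p then some 1 else none
  | odis φ₁ φ₂, ⟨h₁, h₂⟩ => by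
    rw [deg_odis]
    exact (isFiniteStateMap_deg φ₁ h₁).map₂ (isFiniteStateMap_deg φ₂ h₂)
      fun d₁ d₂ => d₁.or (d₂.map (· + opt φ₁))
  | pconj φ₁ φ₂, ⟨h₁, h₂⟩ => by
    rw [deg_pconj]
    exact (isFiniteStateMap_deg φ₁ h₁).map₂ (isFiniteStateMap_deg φ₂ h₂)
      (Option.map₂ fun i j => opt φ₂ * (i - 1) + j)

end PQCL

theorem deg_languages_regular {A : Type*} (φ : PQCL A) (hreg : AtomsRegular φ) :
    (∀ k : ℕ, Language.IsRegular ({w : List A | PQCL.deg φ w = some k} : Language A)) ∧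
    Language.IsRegular ({w : List A | PQCL.deg φ w = none} : Language A) := by
  have hdeg := PQCL.isFiniteStateMap_deg φ hreg
  exact ⟨fun k => hdeg.isRegular_preimage {some k}, hdeg.isRegular_preimage {none}⟩
end
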